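/- Let A ∈ GL(2,ℤ) and suppose 1 is an eigenvalue of A and ā ∈ 𝕋². Then (A,ā) is reversible in G = GL(2,ℤ) ⋉ 𝕋² if and only if there exists R ∈ GL(2,ℤ) with RAR⁻¹ = A⁻¹ such that (AR + I)·ā lies in the image of the map (A − I) : 𝕋² → 𝕋². -/

import Mathlib

noncomputable section

abbrev V : Type := Fin 2 → ℝ

def L : AddSubgroup V where
  carrier := {x | ∀ i, ∃ n : ℤ, x i = (n : ℝ)}
  zero_mem' := fun i => ⟨0, by simp⟩
  add_mem' := by
    rintro a b ha hb i
    obtain ⟨m, hm⟩ := ha i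
    obtain ⟨n, hn⟩ := hb i
    exact ⟨m + n, by simp [hm, hn]⟩
  neg_mem' := by
    rintro a ha i
    obtain ⟨m, hm⟩ := ha i
    exact ⟨-m, by simp [hm]⟩

abbrev T2 := V ⧸ L

def actV (A : Matrix (Fin 2) (Fin 2) ℤ) : V →+ V :=
  (Matrix.mulVecLin (A.map (Int.cast : ℤ → ℝ))).toAddMonoidHom

lemma actV_mem (A : Matrix (Fin 2) (Fin 2) ℤ) : L ≤ L.comap (actV A) := by
  intro x hx
  show actV A x ∈ L
  intro i
  refine ⟨∑ j, A i j * Classical.choose (hx j), ?_⟩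
  show (A.map (Int.cast : ℤ → ℝ)).mulVec x i = _
  simp only [Matrix.mulVec, dotProduct, Matrix.map_apply]
  push_cast
  exact Finset.sum_congr rfl fun j _ =>
    congrArg (fun t => ((A i j : ℝ)) * t) (Classical.choose_spec (hx j))

/-- The action of an integer matrix on the torus `T2`. -/
def act (A : Matrix (Fin 2) (Fin 2) ℤ) : T2 →+ T2 :=
  QuotientAddGroup.map L L (actV A) (actV_mem A)

abbrev GL2 := (Matrix (Fin 2) (Fin 2) ℤ)ˣ

/-- Multiplication in the group `G = GL(2,ℤ) ⋉ 𝕋²`. -/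
def Gmul (p q : GL2 × T2) : GL2 × T2 :=
  (p.1 * q.1, act (p.1 : Matrix (Fin 2) (Fin 2) ℤ) q.2 + p.2)

/-- Inversion in the group `G = GL(2,ℤ) ⋉ 𝕋²`. -/
def Ginv (p : GL2 × T2) : GL2 × T2 :=
  (p.1⁻¹, -act ((p.1⁻¹ : GL2) : Matrix (Fin 2) (Fin 2) ℤ) p.2)

/-! Conjugating `(A, ā)` by `(R, b̄)` gives `(RAR⁻¹, Rā + b̄ - RAR⁻¹b̄)`. Once `RAR⁻¹ = A⁻¹`,
equating this with `(A, ā)⁻¹ = (A⁻¹, -A⁻¹ā)` and applying the automorphism `A` of `𝕋²`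
turns the translation part into `(AR + I)ā = (A - I)(-b̄)`. -/

local notation "M₂" => Matrix (Fin 2) (Fin 2) ℤ

lemma actV_apply (A : M₂) (v : V) : actV A v = (A.map (Int.cast : ℤ → ℝ)).mulVec v := rfl

lemma act_mk (A : M₂) (v : V) :
    act A (QuotientAddGroup.mk v) = QuotientAddGroup.mk (actV A v) := rfl

lemma actV_mul (A B : M₂) (v : V) : actV (A * B) v = actV A (actV B v) := by
  rw [actV_apply, actV_apply, actV_apply, Matrix.mulVec_mulVec]
  exact congrArg (Matrix.mulVec · v) (Matrix.map_mul (f := Int.castRingHom ℝ))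

lemma act_mul (A B : M₂) (x : T2) : act (A * B) x = act A (act B x) := by
  induction x using QuotientAddGroup.induction_on with
  | H v => rw [act_mk, act_mk, act_mk, actV_mul]

lemma act_one (x : T2) : act 1 x = x := by
  induction x using QuotientAddGroup.induction_on with
  | H v => rw [act_mk, actV_apply, Matrix.map_one Int.cast Int.cast_zero Int.cast_one,
      Matrix.one_mulVec]

lemma act_add (A B : M₂) (x : T2) : act (A + B) x = act A x + act B x := by
  induction x using QuotientAddGroup.induction_on with
  | H v => rw [act_mk, act_mk, act_mk, actV_apply, Matrix.map_add Int.cast Int.cast_add,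
      Matrix.add_mulVec, QuotientAddGroup.mk_add, actV_apply, actV_apply]

lemma act_sub (A B : M₂) (x : T2) : act (A - B) x = act A x - act B x :=
  eq_sub_of_add_eq (by rw [← act_add, sub_add_cancel])

lemma act_units_apply_inv (U : GL2) (x : T2) : act (U : M₂) (act ((U⁻¹ : GL2) : M₂) x) = x := by
  rw [← act_mul, Units.mul_inv, act_one]

lemma act_units_inv_apply (U : GL2) (x : T2) : act ((U⁻¹ : GL2) : M₂) (act (U : M₂) x) = x := by
  rw [← act_mul, Units.inv_mul, act_one]

lemma act_units_injective (U : GL2) : Function.Injective (act (U : M₂)) := fun x y h => by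
  simpa only [act_units_inv_apply] using congrArg (act ((U⁻¹ : GL2) : M₂)) h

lemma conj_eq_Ginv_iff (R A : GL2) (b a : T2) :
    Gmul (Gmul (R, b) (A, a)) (Ginv (R, b)) = Ginv (A, a) ↔
      R * A * R⁻¹ = A⁻¹ ∧ act ((A : M₂) * R + 1) a = act ((A : M₂) - 1) (-b) := by
  simp only [Gmul, Ginv, Prod.mk.injEq]
  refine and_congr_right fun hconj => ?_
  have hconj_act :
      act ((R * A : GL2) : M₂) (act ((R⁻¹ : GL2) : M₂) b) = act ((A⁻¹ : GL2) : M₂) b := by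
    rw [← act_mul, ← Units.val_mul, hconj]
  rw [map_neg, hconj_act, ← (act_units_injective A).eq_iff, map_add, map_add, map_neg, map_neg,
    act_units_apply_inv, act_units_apply_inv, ← act_mul, act_add, act_one, act_sub, act_one, map_neg]
  have hdiff : -b + (act ((A : M₂) * R) a + act (A : M₂) b) - -a
      = act ((A : M₂) * R) a + a - (-act (A : M₂) b - -b) := by abel
  rw [← sub_eq_zero, hdiff, sub_eq_zero]

theorem reversible_iff_eigenvalue_one_general (A : GL2) (a : T2) :
    (∃ h : GL2 × T2, Gmul (Gmul h (A, a)) (Ginv h) = Ginv (A, a)) ↔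
    (∃ R : GL2, R * A * R⁻¹ = A⁻¹ ∧
      ∃ x : T2,
        act ((A : Matrix (Fin 2) (Fin 2) ℤ) * (R : Matrix (Fin 2) (Fin 2) ℤ) + 1) a =
          act ((A : Matrix (Fin 2) (Fin 2) ℤ) - 1) x) := by
  constructor
  · rintro ⟨⟨R, b⟩, h⟩
    obtain ⟨hconj, htrans⟩ := (conj_eq_Ginv_iff R A b a).mp h
    exact ⟨R, hconj, -b, htrans⟩
  · rintro ⟨R, hconj, x, hx⟩
    exact ⟨(R, -x), (conj_eq_Ginv_iff R A (-x) a).mpr ⟨hconj, by rwa [neg_neg]⟩⟩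

/-- If `1` is an eigenvalue of `A ∈ GL(2,ℤ)`, then `(A,ā)` is reversible in
`G = GL(2,ℤ) ⋉ 𝕋²` iff there is `R ∈ GL(2,ℤ)` with `RAR⁻¹ = A⁻¹` such that
`(AR + I)·ā` lies in the image of `(A - I) : 𝕋² → 𝕋²`. -/
theorem reversible_iff_eigenvalue_one (A : GL2) (a : T2)
    (hD : ((A : Matrix (Fin 2) (Fin 2) ℤ) - 1).det = 0) :
    (∃ h : GL2 × T2, Gmul (Gmul h (A, a)) (Ginv h) = Ginv (A, a)) ↔
    (∃ R : GL2, R * A * R⁻¹ = A⁻¹ ∧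
      ∃ x : T2,
        act ((A : Matrix (Fin 2) (Fin 2) ℤ) * (R : Matrix (Fin 2) (Fin 2) ℤ) + 1) a =
          act ((A : Matrix (Fin 2) (Fin 2) ℤ) - 1) x) :=
  reversible_iff_eigenvalue_one_general A a
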